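/- arXiv:2604.07724 — 3 statements merged into one kernel-verified Lean document; each statement's English description precedes it below -/
import Mathlib

section
/- Let p be an odd prime and let n be an integer. Then (A₁ mod p)^n is the identity matrix over ℤ/pℤ if and only if n ≡ 0 (mod 6). -/
/-!
The characteristic polynomial of `A` is `(X - 1)(X² - X + 1)`, which divides `X⁶ - 1`, so `A⁶ = 1`
over every commutative ring. The order of `A` is then `6` as soon as `A² ≠ 1` and `A³ ≠ 1`, and
single entries show this: `(A²)₀₀ = 0 ≠ 1` and `(A³)₀₁ = -2`, which is nonzero modulo an odd prime.
-/

/-- The coloring matrix `A_{σ₁σ₂}` of the 3-braid `σ₁σ₂`, reduced modulo `p`. -/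
def A₁modp (p : ℕ) : Matrix (Fin 3) (Fin 3) (ZMod p) := !![0, 1, 0; 0, 0, 1; 1, -2, 2]

theorem Matrix.zpow_eq_one_iff_orderOf_dvd {n R : Type*} [Fintype n] [DecidableEq n] [CommRing R]
    {A : Matrix n n R} (hA : IsUnit A.det) (k : ℤ) : A ^ k = 1 ↔ (orderOf A : ℤ) ∣ k := by
  obtain ⟨u, rfl⟩ := A.isUnit_iff_isUnit_det.mpr hA
  rw [← Matrix.coe_units_zpow, Units.val_eq_one, orderOf_units, orderOf_dvd_iff_zpow_eq_one]

theorem Nat.Prime.eq_two_or_eq_three_of_dvd_six {q : ℕ} (hq : q.Prime) (h : q ∣ 6) :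
    q = 2 ∨ q = 3 :=
  ((Nat.Prime.dvd_mul hq).mp (h : q ∣ 2 * 3)).imp
    (Nat.prime_dvd_prime_iff_eq hq Nat.prime_two).mp (Nat.prime_dvd_prime_iff_eq hq Nat.prime_three).mp

section BraidColoring

variable (R : Type*) [CommRing R]

def braidColoringMatrix : Matrix (Fin 3) (Fin 3) R := !![0, 1, 0; 0, 0, 1; 1, -2, 2]

theorem det_braidColoringMatrix : (braidColoringMatrix R).det = 1 := by
  simp [braidColoringMatrix, Matrix.det_fin_three]

theorem braidColoringMatrix_sq : braidColoringMatrix R ^ 2 = !![0, 0, 1; 1, -2, 2; 2, -3, 2] := by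
  ext i j
  fin_cases i <;> fin_cases j <;>
    simp [braidColoringMatrix, sq, Matrix.mul_apply, Fin.sum_univ_three] <;> ring

theorem braidColoringMatrix_pow_three :
    braidColoringMatrix R ^ 3 = !![1, -2, 2; 2, -3, 2; 2, -2, 1] := by
  rw [pow_succ, braidColoringMatrix_sq]
  ext i j
  fin_cases i <;> fin_cases j <;>
    simp [braidColoringMatrix, Matrix.mul_apply, Fin.sum_univ_three] <;> ring

theorem braidColoringMatrix_pow_six : braidColoringMatrix R ^ 6 = 1 := by
  rw [show 6 = 3 * 2 from rfl, pow_mul, braidColoringMatrix_pow_three]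
  ext i j
  fin_cases i <;> fin_cases j <;> simp [sq, Matrix.mul_apply, Fin.sum_univ_three] <;> ring

variable {R}

theorem orderOf_braidColoringMatrix (h2 : (2 : R) ≠ 0) : orderOf (braidColoringMatrix R) = 6 := by
  have : Nontrivial R := nontrivial_of_ne 2 0 h2
  refine orderOf_eq_of_pow_and_pow_div_prime (by norm_num) (braidColoringMatrix_pow_six R) ?_
  intro q hq hq6
  rcases hq.eq_two_or_eq_three_of_dvd_six hq6 with rfl | rfl
  · rw [show 6 / 2 = 3 from rfl, braidColoringMatrix_pow_three]
    intro h
    exact h2 (by simpa using congrFun (congrFun h 0) 1)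
  · rw [show 6 / 3 = 2 from rfl, braidColoringMatrix_sq]
    intro h
    simpa using congrFun (congrFun h 0) 0

end BraidColoring

/-- For an odd prime `p` and `n : ℤ`, `(A₁ mod p) ^ n = 1` iff `6 ∣ n`. -/
theorem A₁modp_zpow_eq_one_iff (p : ℕ) (hp : p.Prime) (hodd : Odd p) (n : ℤ) :
    (A₁modp p) ^ n = 1 ↔ (6 : ℤ) ∣ n := by
  have : Fact p.Prime := ⟨hp⟩
  have h2 : (2 : ZMod p) ≠ 0 := by
    refine Ring.two_ne_zero ?_
    rw [ZMod.ringChar_zmod_n]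
    rintro rfl
    norm_num at hodd
  have hdet : IsUnit (braidColoringMatrix (ZMod p)).det := by
    rw [det_braidColoringMatrix]
    exact isUnit_one
  change braidColoringMatrix (ZMod p) ^ n = 1 ↔ _
  rw [Matrix.zpow_eq_one_iff_orderOf_dvd hdet, orderOf_braidColoringMatrix h2]
  norm_cast
end

section
/- Let p be an odd prime and let n be an integer with n ≢ 0 (mod 6). Then the rank of the matrix (A₁ mod p)^n − I over the field ℤ/pℤ equals 1 if p = 3 and n ≡ 2 or 4 (mod 6), and equals 2 otherwise. -/
namespace Matrix

variable {K m n : Type*} [Field K] [Fintype n]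

theorem le_rank_of_det_submatrix_ne_zero {k : ℕ} (M : Matrix m n K) (r : Fin k → m)
    (c : Fin k → n) (h : (M.submatrix r c).det ≠ 0) : k ≤ M.rank := by
  simpa [rank_of_det_ne_zero h] using rank_submatrix_le M r c

theorem rank_lt_card_of_mulVec_eq_zero {M : Matrix m n K} {v : n → K} (hv : v ≠ 0)
    (h : M *ᵥ v = 0) : M.rank < Fintype.card n := by
  have hker : 0 < Module.finrank K (LinearMap.ker M.mulVecLin) :=
    Module.finrank_pos_iff_exists_ne_zero.2 ⟨⟨v, h⟩, (Submodule.mk_eq_zero _ h).not.2 hv⟩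
  have := LinearMap.finrank_range_add_finrank_ker M.mulVecLin
  rw [Module.finrank_fintype_fun_eq_card] at this
  unfold rank
  omega

theorem rank_neg (M : Matrix m n K) : (-M).rank = M.rank := by
  have : (-M).mulVecLin = -M.mulVecLin := LinearMap.ext fun v => neg_mulVec v M
  rw [rank, rank, this, LinearMap.range_neg]

theorem rank_inv_sub_one [DecidableEq n] {M : Matrix n n K} (h : IsUnit M.det) :
    (M⁻¹ - 1).rank = (M - 1).rank := by
  have : M⁻¹ - 1 = M⁻¹ * -(M - 1) := by
    rw [mul_neg, mul_sub, nonsing_inv_mul M h, mul_one, neg_sub]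
  rw [this, rank_mul_eq_right_of_isUnit_det _ _ (isUnit_nonsing_inv_det M h), rank_neg]

theorem zpow_eq_zpow_emod_of_pow_eq_one {R : Type*} [CommRing R] [DecidableEq n]
    {M : Matrix n n R} {k : ℕ} (h : M ^ k = 1) (z : ℤ) : M ^ z = M ^ (z % k) := by
  rcases eq_or_ne k 0 with rfl | hk
  · simp
  have hM : IsUnit M.det := IsUnit.of_pow_eq_one (by rw [← det_pow, h, det_one]) hk
  set u := ((isUnit_iff_isUnit_det M).2 hM).unit
  have hu : u ^ k = 1 := Units.ext (by simpa [u] using h)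
  simpa [u, coe_units_zpow] using congrArg Units.val (zpow_eq_zpow_emod' z hu)

end Matrix

namespace A₁modp

open Matrix

variable {p : ℕ}

theorem det_eq_one : (A₁modp p).det = 1 := by
  simp [A₁modp, det_fin_three]

theorem sq_eq : A₁modp p ^ 2 = !![0, 0, 1; 1, -2, 2; 2, -3, 2] := by
  rw [sq, A₁modp, mul_fin_three]
  norm_num

theorem pow_three : A₁modp p ^ 3 = !![1, -2, 2; 2, -3, 2; 2, -2, 1] := by
  rw [pow_succ, sq_eq, A₁modp, mul_fin_three]
  norm_num

theorem pow_six : A₁modp p ^ 6 = 1 := by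
  rw [show 6 = 3 * 2 by rfl, pow_mul, pow_three, sq, mul_fin_three, one_fin_three]
  norm_num

theorem zpow_eq_zpow_emod_six (n : ℤ) : A₁modp p ^ n = A₁modp p ^ (n % 6) :=
  zpow_eq_zpow_emod_of_pow_eq_one pow_six n

theorem mulVec_ones : A₁modp p *ᵥ ![1, 1, 1] = ![1, 1, 1] := by
  ext i
  fin_cases i <;> simp [A₁modp, mulVec, dotProduct, Fin.sum_univ_three]

theorem pow_mulVec_ones (k : ℕ) : A₁modp p ^ k *ᵥ ![1, 1, 1] = ![1, 1, 1] := by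
  induction k with
  | zero => simp
  | succ k ih => rw [pow_succ, ← mulVec_mulVec, mulVec_ones, ih]

theorem det_topLeft_pow_one_sub_one :
    ((A₁modp p ^ 1 - 1).submatrix ![0, 1] ![0, 1]).det = 1 := by
  rw [det_fin_two]
  simp [A₁modp, one_apply]

theorem det_topLeft_sq_sub_one : ((A₁modp p ^ 2 - 1).submatrix ![0, 1] ![0, 1]).det = 3 := by
  rw [det_fin_two]
  simp [sq_eq, one_apply]
  norm_num

theorem det_topLeft_pow_three_sub_one :
    ((A₁modp p ^ 3 - 1).submatrix ![0, 1] ![0, 1]).det = 4 := by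
  rw [det_fin_two]
  simp [pow_three, one_apply]
  norm_num

variable [Fact p.Prime]

theorem rank_pow_sub_one_le_two (k : ℕ) : (A₁modp p ^ k - 1).rank ≤ 2 := by
  have : (A₁modp p ^ k - 1) *ᵥ ![1, 1, 1] = 0 := by
    rw [sub_mulVec, pow_mulVec_ones, one_mulVec, sub_self]
  simpa using Nat.le_of_lt_succ (rank_lt_card_of_mulVec_eq_zero (by simp) this)

theorem rank_pow_sub_one_eq_two {k : ℕ}
    (h : ((A₁modp p ^ k - 1).submatrix ![0, 1] ![0, 1]).det ≠ 0) :
    (A₁modp p ^ k - 1).rank = 2 :=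
  (rank_pow_sub_one_le_two k).antisymm (le_rank_of_det_submatrix_ne_zero _ _ _ h)

theorem rank_sq_sub_one_mod_three : (A₁modp 3 ^ 2 - 1).rank = 1 := by
  have hvec : A₁modp 3 ^ 2 - 1 = vecMulVec ![2, 1, 2] ![1, 0, 2] := by decide
  refine (hvec ▸ rank_vecMulVec_le _ _).antisymm ?_
  exact le_rank_of_det_submatrix_ne_zero _ ![0] ![0] (by decide)

theorem rank_zpow_sub_one_of_emod {n : ℤ} {k : ℕ} (h : n % 6 = k ∨ -n % 6 = k) :
    (A₁modp p ^ n - 1).rank = (A₁modp p ^ k - 1).rank := by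
  have hdet : IsUnit (A₁modp p).det := det_eq_one ▸ isUnit_one
  rcases h with h | h
  · rw [zpow_eq_zpow_emod_six, h, zpow_natCast]
  · rw [← rank_inv_sub_one (hdet.det_zpow n), ← Matrix.zpow_neg hdet, zpow_eq_zpow_emod_six, h,
      zpow_natCast]

theorem rank_pow_sub_one (hp2 : p ≠ 2) {k : ℕ} (hk : k = 1 ∨ k = 2 ∨ k = 3) :
    (A₁modp p ^ k - 1).rank = if p = 3 ∧ k = 2 then 1 else 2 := by
  rcases hk with rfl | rfl | rfl
  · rw [if_neg (by omega)]
    exact rank_pow_sub_one_eq_two (det_topLeft_pow_one_sub_one ▸ one_ne_zero)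
  · by_cases hp3 : p = 3
    · subst hp3
      exact rank_sq_sub_one_mod_three
    · rw [if_neg (by tauto)]
      exact rank_pow_sub_one_eq_two (det_topLeft_sq_sub_one ▸ ZMod.prime_ne_zero p 3 hp3)
  · rw [if_neg (by omega)]
    have h2 : (2 : ZMod p) ≠ 0 := ZMod.prime_ne_zero p 2 hp2
    have h4 : (4 : ZMod p) ≠ 0 := by simpa [show (4 : ZMod p) = 2 * 2 by norm_num] using h2
    exact rank_pow_sub_one_eq_two (det_topLeft_pow_three_sub_one ▸ h4)

end A₁modp

/-- For an odd prime `p` and an integer `n` with `n ≢ 0 (mod 6)`, the rank of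
`(A₁ mod p) ^ n - I` over `ℤ/pℤ` is `1` if `p = 3` and `n ≡ 2` or `4 (mod 6)`,
and is `2` otherwise. -/
theorem rank_A₁modp_zpow_sub_one (p : ℕ) (hp : p.Prime) (hodd : Odd p) (n : ℤ)
    (hn : ¬ (6 : ℤ) ∣ n) :
    ((A₁modp p) ^ n - 1).rank =
      if p = 3 ∧ (n % 6 = 2 ∨ n % 6 = 4) then 1 else 2 := by
  have := Fact.mk hp
  have hp2 : p ≠ 2 := by
    rintro rfl
    norm_num at hodd
  obtain ⟨k, hk, hnk⟩ : ∃ k : ℕ, (k = 1 ∨ k = 2 ∨ k = 3) ∧ (n % 6 = k ∨ -n % 6 = k) :=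
    ⟨(min (n % 6) (-n % 6)).toNat, by omega, by omega⟩
  rw [A₁modp.rank_zpow_sub_one_of_emod hnk, A₁modp.rank_pow_sub_one hp2 hk]
  simp only [show k = 2 ↔ (n % 6 = 2 ∨ n % 6 = 4) by omega]
end

section
/- Let G be the free product (coproduct) of a cyclic group of order 2 and a cyclic group of order 3 (i.e., G ≅ ℤ/2ℤ ∗ ℤ/3ℤ). If a, b ∈ G satisfy ab = ba, then there exist c ∈ G and integers k, l such that a = c^k and b = c^l. -/
/-!
Every element of `ℤ/2ℤ ∗ ℤ/3ℤ` is the product of a unique reduced word in the letters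
`s`, `t`, `t⁻¹` (consecutive letters from different factors); uniqueness comes from the
action of the group on reduced words by left multiplication (van der Waerden's trick).

For commuting `a` and `b` we descend on the total length of their normal forms. If the
product `a * b` involves no cancellation at the seam, neither does `b * a`, so the two
normal forms commute as words and are powers of a common word. Otherwise both seams
cancel. If the first and last letters of `b` lie in one factor, then so do those of `a`,
and conjugating by the first letter of a word of length at least two shortens the pair
(two single letters of one factor are powers of its generator). If not, comparing the
first letters of `a * b = b * a` shows that one of the two normal forms cancels completely
in the product, say `|b| = |a| + |a * b|`, and we pass to the pair `(a, a * b)`.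
-/

/-- The free product `ℤ/2ℤ ∗ ℤ/3ℤ` of a cyclic group of order 2 and a cyclic group
of order 3. -/
abbrev FreeProdC2C3 : Type :=
  Monoid.Coprod (Multiplicative (ZMod 2)) (Multiplicative (ZMod 3))

section CommonRoot

variable {G : Type*} [Group G]

def HasCommonRoot (a b : G) : Prop :=
  ∃ (c : G) (k l : ℤ), a = c ^ k ∧ b = c ^ l

theorem HasCommonRoot.symm {a b : G} (h : HasCommonRoot a b) : HasCommonRoot b a :=
  let ⟨c, k, l, ha, hb⟩ := h
  ⟨c, l, k, hb, ha⟩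

theorem hasCommonRoot_one_left (b : G) : HasCommonRoot 1 b :=
  ⟨b, 0, 1, (zpow_zero b).symm, (zpow_one b).symm⟩

theorem ne_one_of_not_hasCommonRoot {a b : G} (h : ¬HasCommonRoot a b) : a ≠ 1 ∧ b ≠ 1 :=
  ⟨by rintro rfl; exact h (hasCommonRoot_one_left b),
    by rintro rfl; exact h (hasCommonRoot_one_left a).symm⟩

theorem HasCommonRoot.of_conj {a b : G} (g : G)
    (h : HasCommonRoot (g⁻¹ * a * g) (g⁻¹ * b * g)) : HasCommonRoot a b := by
  obtain ⟨c, k, l, ha, hb⟩ := h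
  refine ⟨g * c * g⁻¹, k, l, ?_, ?_⟩
  · rw [conj_zpow, ← ha]; group
  · rw [conj_zpow, ← hb]; group

theorem HasCommonRoot.of_self_mul {a b : G} (h : HasCommonRoot a (a * b)) : HasCommonRoot a b := by
  obtain ⟨c, k, l, ha, hab⟩ := h
  refine ⟨c, k, -k + l, ha, ?_⟩
  rw [zpow_add, zpow_neg, ← ha, ← hab, inv_mul_cancel_left]

end CommonRoot

theorem List.exists_flatten_replicate_of_append_comm {α : Type*} {s t : List α}
    (h : s ++ t = t ++ s) :
    ∃ (r : List α) (m n : ℕ), s = (replicate m r).flatten ∧ t = (replicate n r).flatten := by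
  induction hn : s.length + t.length using Nat.strong_induction_on generalizing s t with
  | _ n ih =>
  wlog hst : s.length ≤ t.length generalizing s t
  · obtain ⟨r, m, k, ht, hs⟩ := this h.symm (by omega) (by omega)
    exact ⟨r, k, m, hs, ht⟩
  rcases eq_or_ne s [] with rfl | hs
  · exact ⟨t, 0, 1, rfl, by simp⟩
  obtain ⟨d, rfl⟩ : s <+: t :=
    prefix_of_prefix_length_le (prefix_append s t) (h ▸ prefix_append t s) hst
  have hd : s ++ d = d ++ s := by simpa using h
  obtain ⟨r, m, k, rfl, rfl⟩ := ih _ (by simp [← hn, length_pos_iff.2 hs]) hd rfl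
  exact ⟨r, m, m + k, rfl, by rw [replicate_add, flatten_append]⟩

def zmodPowersHom {M : Type*} [Monoid M] (n : ℕ) [NeZero n] (x : M) (hx : x ^ n = 1) :
    Multiplicative (ZMod n) →* M where
  toFun m := x ^ m.toAdd.val
  map_one' := by simp
  map_mul' a b := by
    rw [toAdd_mul, ZMod.val_add, ← pow_eq_pow_mod _ hx, pow_add]

namespace FreeProdC2C3

inductive Letter
  | s | t | tInv

namespace Letter

def factor : Letter → Bool
  | s => false
  | t => true
  | tInv => true

def inv : Letter → Letter
  | s => s
  | t => tInv
  | tInv => t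

def toGroup : Letter → FreeProdC2C3
  | s => Monoid.Coprod.inl (.ofAdd 1)
  | t => Monoid.Coprod.inr (.ofAdd 1)
  | tInv => Monoid.Coprod.inr (.ofAdd 2)

@[simp] theorem factor_inv (p : Letter) : p.inv.factor = p.factor := by
  cases p <;> rfl

theorem toGroup_mul_toGroup_inv (p : Letter) : p.toGroup * p.inv.toGroup = 1 := by
  cases p <;> simp only [inv, toGroup, ← map_mul, ← ofAdd_add] <;> exact map_one _

theorem toGroup_t_mul_t : t.toGroup * t.toGroup = tInv.toGroup := by
  simp only [toGroup, ← map_mul, ← ofAdd_add]; rfl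

theorem toGroup_tInv_mul_tInv : tInv.toGroup * tInv.toGroup = t.toGroup := by
  simp only [toGroup, ← map_mul, ← ofAdd_add]; rfl

theorem toGroup_inv (p : Letter) : p.inv.toGroup = p.toGroup⁻¹ :=
  eq_inv_of_mul_eq_one_right (toGroup_mul_toGroup_inv p)

theorem hasCommonRoot_toGroup {p q : Letter} (h : p.factor = q.factor) :
    HasCommonRoot p.toGroup q.toGroup := by
  have ht : ∀ r : Letter, r.factor = true → ∃ k : ℤ, r.toGroup = t.toGroup ^ k := by
    rintro (_ | _ | _) hr
    · cases hr
    · exact ⟨1, (zpow_one _).symm⟩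
    · exact ⟨-1, by rw [zpow_neg_one, ← toGroup_inv]; rfl⟩
  cases hp : p.factor
  · obtain rfl : p = s := by cases p <;> simp_all [factor]
    obtain rfl : q = s := by cases q <;> simp_all [factor]
    exact ⟨s.toGroup, 1, 1, by simp⟩
  · obtain ⟨k, hk⟩ := ht p hp
    obtain ⟨l, hl⟩ := ht q (h ▸ hp)
    exact ⟨t.toGroup, k, l, hk, hl⟩

end Letter

open Letter

def IsReduced (w : List Letter) : Prop :=
  w.IsChain fun p q => p.factor ≠ q.factor

def wordProd (w : List Letter) : FreeProdC2C3 :=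
  (w.map Letter.toGroup).prod

@[simp] theorem wordProd_nil : wordProd [] = 1 := rfl

@[simp] theorem wordProd_cons (p : Letter) (w : List Letter) :
    wordProd (p :: w) = p.toGroup * wordProd w :=
  List.prod_cons

@[simp] theorem wordProd_append (u w : List Letter) :
    wordProd (u ++ w) = wordProd u * wordProd w := by
  simp [wordProd]

theorem wordProd_flatten_replicate (r : List Letter) (n : ℕ) :
    wordProd (List.replicate n r).flatten = wordProd r ^ n := by
  simp [wordProd, List.map_flatten, List.prod_flatten]

def push : Letter → List Letter → List Letter
  | s, s :: w => w
  | t, t :: w => tInv :: w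
  | t, tInv :: w => w
  | tInv, t :: w => w
  | tInv, tInv :: w => t :: w
  | p, w => p :: w

theorem push_of_factor_ne {p : Letter} {w : List Letter}
    (h : ∀ q ∈ w.head?, p.factor ≠ q.factor) : push p w = p :: w := by
  rcases w with _ | ⟨q, w⟩
  · cases p <;> rfl
  · cases p <;> cases q <;> simp_all [factor, push]

theorem push_cons_of_factor_eq {p q : Letter} (w : List Letter) (h : p.factor = q.factor) :
    push p (q :: w) = w ∨ ∃ r, push p (q :: w) = r :: w ∧ r.factor = p.factor := by
  cases p <;> cases q <;> simp_all [factor, push]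

theorem push_inv_cons (p : Letter) (w : List Letter) : push p.inv (p :: w) = w := by
  cases p <;> rfl

theorem isReduced_push (p : Letter) {w : List Letter} (hw : IsReduced w) :
    IsReduced (push p w) := by
  by_cases h : ∀ q ∈ w.head?, p.factor ≠ q.factor
  · rw [push_of_factor_ne h]
    exact List.isChain_cons.2 ⟨h, hw⟩
  obtain ⟨q, w, rfl, hpq⟩ : ∃ q w', w = q :: w' ∧ p.factor = q.factor := by
    rcases w with _ | ⟨q, w⟩ <;> simp_all
  rcases push_cons_of_factor_eq w hpq with h' | ⟨r, h', hr⟩ <;> rw [h']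
  · exact hw.tail
  · rw [IsReduced, List.isChain_cons] at hw ⊢
    exact ⟨by simpa [hr, hpq] using hw.1, hw.2⟩

theorem wordProd_push (p : Letter) (w : List Letter) :
    wordProd (push p w) = p.toGroup * wordProd w := by
  rcases w with _ | ⟨q, w⟩
  · cases p <;> rfl
  · have := toGroup_mul_toGroup_inv
    cases p <;> cases q <;>
      simp_all [push, inv, ← mul_assoc, toGroup_t_mul_t, toGroup_tInv_mul_tInv]

theorem push_of_isReduced_cons {p q : Letter} {w : List Letter} (hw : IsReduced (q :: w))
    (h : p.factor = q.factor) : push p w = p :: w :=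
  push_of_factor_ne fun r hr => h ▸ (List.isChain_cons.1 hw).1 r hr

theorem push_inv_push (p : Letter) {w : List Letter} (hw : IsReduced w) :
    push p.inv (push p w) = w := by
  rcases w with _ | ⟨q, w⟩
  · cases p <;> rfl
  have := push_of_isReduced_cons hw (p := q)
  cases p <;> cases q <;> simp_all [push, factor, inv]

theorem push_t_push_t {w : List Letter} (hw : IsReduced w) : push t (push t w) = push tInv w := by
  rcases w with _ | ⟨q, w⟩
  · rfl
  cases q
  · rfl
  · rfl
  · exact push_of_isReduced_cons hw (p := t) rfl

def ReducedWord : Type := {w : List Letter // IsReduced w}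

def pushEnd (p : Letter) : Function.End ReducedWord :=
  fun w => ⟨push p w.1, isReduced_push p w.2⟩

theorem pushEnd_inv_mul (p : Letter) : pushEnd p.inv * pushEnd p = 1 :=
  funext fun w => Subtype.ext (push_inv_push p w.2)

theorem pushEnd_t_sq : pushEnd t ^ 2 = pushEnd tInv :=
  funext fun w => Subtype.ext (push_t_push_t w.2)

theorem pushEnd_s_pow_two : pushEnd s ^ 2 = 1 :=
  (sq _).trans (pushEnd_inv_mul s)

theorem pushEnd_t_pow_three : pushEnd t ^ 3 = 1 := by
  rw [pow_succ, pushEnd_t_sq]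
  exact pushEnd_inv_mul t

def toEnd : FreeProdC2C3 →* Function.End ReducedWord :=
  Monoid.Coprod.lift (zmodPowersHom 2 _ pushEnd_s_pow_two) (zmodPowersHom 3 _ pushEnd_t_pow_three)

theorem toEnd_toGroup (p : Letter) : toEnd p.toGroup = pushEnd p := by
  cases p
  · exact pow_one _
  · exact pow_one _
  · exact pushEnd_t_sq

def normalForm (g : FreeProdC2C3) : List Letter :=
  (toEnd g ⟨[], List.isChain_nil⟩).1

theorem isReduced_normalForm (g : FreeProdC2C3) : IsReduced (normalForm g) :=
  (toEnd g _).2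

theorem normalForm_toGroup_mul (p : Letter) (g : FreeProdC2C3) :
    normalForm (p.toGroup * g) = push p (normalForm g) := by
  rw [normalForm, map_mul, toEnd_toGroup]
  rfl

theorem induction_on_letters {motive : FreeProdC2C3 → Prop} (g : FreeProdC2C3) (one : motive 1)
    (toGroup_mul : ∀ (p : Letter) g, motive g → motive (p.toGroup * g)) : motive g := by
  induction g using Monoid.Coprod.induction_on' with
  | one => exact one
  | inl_mul m g hg =>
    fin_cases m
    · convert hg using 1
      exact (congrArg (· * g) (map_one Monoid.Coprod.inl)).trans (one_mul g)
    · exact toGroup_mul s g hg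
  | inr_mul m g hg =>
    fin_cases m
    · convert hg using 1
      exact (congrArg (· * g) (map_one Monoid.Coprod.inr)).trans (one_mul g)
    · exact toGroup_mul t g hg
    · exact toGroup_mul tInv g hg

@[simp] theorem wordProd_normalForm (g : FreeProdC2C3) : wordProd (normalForm g) = g := by
  induction g using induction_on_letters with
  | one => rfl
  | toGroup_mul p g hg => rw [normalForm_toGroup_mul, wordProd_push, hg]

theorem normalForm_wordProd {w : List Letter} (hw : IsReduced w) : normalForm (wordProd w) = w := by
  induction w with
  | nil => rfl
  | cons p w ih =>
    rw [wordProd_cons, normalForm_toGroup_mul, ih hw.tail]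
    exact push_of_factor_ne (List.isChain_cons.1 hw).1

theorem normalForm_injective : Function.Injective normalForm :=
  Function.LeftInverse.injective wordProd_normalForm

@[simp] theorem normalForm_eq_nil {g : FreeProdC2C3} : normalForm g = [] ↔ g = 1 :=
  normalForm_injective.eq_iff' rfl

theorem normalForm_toGroup (p : Letter) : normalForm p.toGroup = [p] := by
  simpa using normalForm_wordProd (List.isChain_singleton p)

def headFactor (g : FreeProdC2C3) : Option Bool :=
  (normalForm g).head?.map factor

def lastFactor (g : FreeProdC2C3) : Option Bool :=
  (normalForm g).getLast?.map factor

theorem length_push_le (p : Letter) (w : List Letter) : (push p w).length ≤ w.length + 1 := by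
  rcases w with _ | ⟨q, w⟩
  · cases p <;> simp [push]
  · cases p <;> cases q <;> simp [push] <;> omega

theorem length_push_cons_le {p q : Letter} (w : List Letter) (h : p.factor = q.factor) :
    (push p (q :: w)).length ≤ w.length + 1 := by
  rcases push_cons_of_factor_eq w h with h' | ⟨r, h', -⟩ <;> simp [h']

theorem normalForm_wordProd_cons_mul (p : Letter) (w : List Letter) (b : FreeProdC2C3) :
    normalForm (wordProd (p :: w) * b) = push p (normalForm (wordProd w * b)) := by
  rw [wordProd_cons, mul_assoc, normalForm_toGroup_mul]

theorem length_normalForm_wordProd_mul_le (u : List Letter) (b : FreeProdC2C3) :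
    (normalForm (wordProd u * b)).length ≤ u.length + (normalForm b).length := by
  induction u with
  | nil => simp
  | cons p u ih =>
    rw [normalForm_wordProd_cons_mul]
    have := length_push_le p (normalForm (wordProd u * b))
    simp only [List.length_cons]
    omega

theorem normalForm_mul_of_lastFactor_ne {a b : FreeProdC2C3} (h : lastFactor a ≠ headFactor b) :
    normalForm (a * b) = normalForm a ++ normalForm b := by
  have hred : IsReduced (normalForm a ++ normalForm b) := by
    refine List.isChain_append.2 ⟨isReduced_normalForm a, isReduced_normalForm b, ?_⟩
    intro x hx y hy hxy
    exact h (by simp [lastFactor, headFactor, Option.mem_def.1 hx, Option.mem_def.1 hy, hxy])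
  rw [← normalForm_wordProd hred, wordProd_append, wordProd_normalForm, wordProd_normalForm]

theorem length_normalForm_mul_lt {a b : FreeProdC2C3} (ha : a ≠ 1)
    (h : lastFactor a = headFactor b) :
    (normalForm (a * b)).length < (normalForm a).length + (normalForm b).length := by
  obtain ⟨u, p, hu⟩ := (List.eq_nil_or_concat' (normalForm a)).resolve_left (by simpa using ha)
  obtain ⟨q, w, hw, hpq⟩ : ∃ q w, normalForm b = q :: w ∧ p.factor = q.factor := by
    simp only [lastFactor, headFactor, hu, List.getLast?_concat, Option.map_some] at h
    rcases hb : normalForm b with _ | ⟨q, w⟩ <;> simp_all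
  have hab : a * b = wordProd u * (p.toGroup * b) := by
    rw [← wordProd_normalForm a, hu, wordProd_append, mul_assoc]
    simp
  have := length_normalForm_wordProd_mul_le u (p.toGroup * b)
  rw [normalForm_toGroup_mul, hw] at this
  have := length_push_cons_le w hpq
  rw [hab, hu, hw]
  simp only [List.length_append, List.length_cons, List.length_nil] at *
  omega

theorem lastFactor_eq_headFactor_of_commute {a b : FreeProdC2C3} (h : Commute a b) (ha : a ≠ 1)
    (hab : lastFactor a = headFactor b) : lastFactor b = headFactor a := by
  by_contra hba
  have hlt := length_normalForm_mul_lt ha hab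
  rw [h.eq, normalForm_mul_of_lastFactor_ne hba, List.length_append] at hlt
  omega

theorem hasCommonRoot_of_lastFactor_ne {a b : FreeProdC2C3} (h : Commute a b)
    (hab : lastFactor a ≠ headFactor b) (hba : lastFactor b ≠ headFactor a) :
    HasCommonRoot a b := by
  have happ : normalForm a ++ normalForm b = normalForm b ++ normalForm a := by
    rw [← normalForm_mul_of_lastFactor_ne hab, ← normalForm_mul_of_lastFactor_ne hba, h.eq]
  obtain ⟨r, m, n, ha, hb⟩ := List.exists_flatten_replicate_of_append_comm happ
  refine ⟨wordProd r, m, n, ?_, ?_⟩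
  · rw [zpow_natCast, ← wordProd_flatten_replicate, ← ha, wordProd_normalForm]
  · rw [zpow_natCast, ← wordProd_flatten_replicate, ← hb, wordProd_normalForm]

theorem getLast?_map_factor_cons {r r' : Letter} (w : List Letter) (h : r.factor = r'.factor) :
    (r :: w).getLast?.map factor = (r' :: w).getLast?.map factor := by
  rcases eq_or_ne w [] with rfl | hw
  · simp [h]
  · simp [List.getLast?_cons_of_ne_nil hw]

theorem headFactor_toGroup (q : Letter) : headFactor q.toGroup = some q.factor := by
  simp [headFactor, normalForm_toGroup]

theorem normalForm_inv_toGroup_mul (q : Letter) (g : FreeProdC2C3) :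
    normalForm (q.toGroup⁻¹ * g) = push q.inv (normalForm g) := by
  rw [← toGroup_inv, normalForm_toGroup_mul]

theorem length_normalForm_conj_le {g : FreeProdC2C3} {q : Letter}
    (hh : headFactor g = some q.factor) (hl : lastFactor g = some q.factor) :
    (normalForm (q.toGroup⁻¹ * g * q.toGroup)).length ≤ (normalForm g).length := by
  obtain ⟨r, w, hg, hr⟩ : ∃ r w, normalForm g = r :: w ∧ r.factor = q.factor := by
    rcases hg : normalForm g with _ | ⟨r, w⟩ <;> simp_all [headFactor]
  have hg' := normalForm_inv_toGroup_mul q g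
  rw [hg] at hg' ⊢
  -- `q⁻¹` either cancels the first letter, which pays for the final `q`, or merges with it,
  -- leaving the last letter in the factor of `q`, so that the final `q` cancels at the seam.
  rcases push_cons_of_factor_eq w (p := q.inv) (q := r) (by simp [hr]) with hw | ⟨r', hw, hr'⟩
  · have := length_normalForm_wordProd_mul_le (normalForm (q.toGroup⁻¹ * g)) q.toGroup
    rw [wordProd_normalForm, hg', hw, normalForm_toGroup] at this
    simpa using this
  · have hne : q.toGroup⁻¹ * g ≠ 1 := by simp [← normalForm_eq_nil, hg', hw]
    have hlast : lastFactor (q.toGroup⁻¹ * g) = headFactor q.toGroup := by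
      rw [headFactor_toGroup, ← hl, lastFactor, lastFactor, hg', hw, hg]
      exact getLast?_map_factor_cons w (by simp [hr, hr'])
    have := length_normalForm_mul_lt hne hlast
    rw [hg', hw, normalForm_toGroup] at this
    simpa using this

theorem length_normalForm_conj_lt {g : FreeProdC2C3} {q : Letter}
    (hh : (normalForm g).head? = some q) (hl : lastFactor g = some q.factor)
    (h2 : 2 ≤ (normalForm g).length) :
    (normalForm (q.toGroup⁻¹ * g * q.toGroup)).length < (normalForm g).length := by
  obtain ⟨w, hg⟩ : ∃ w, normalForm g = q :: w := by
    rcases hg : normalForm g with _ | ⟨r, w⟩ <;> simp_all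
  have hg' : normalForm (q.toGroup⁻¹ * g) = w := by
    rw [normalForm_inv_toGroup_mul, hg, push_inv_cons]
  have hw : w ≠ [] := by rintro rfl; simp [hg] at h2
  have hne : q.toGroup⁻¹ * g ≠ 1 := by simpa [← normalForm_eq_nil, hg'] using hw
  have hlast : lastFactor (q.toGroup⁻¹ * g) = headFactor q.toGroup := by
    rw [headFactor_toGroup, ← hl, lastFactor, lastFactor, hg', hg,
      List.getLast?_cons_of_ne_nil hw]
  have := length_normalForm_mul_lt hne hlast
  rw [hg', normalForm_toGroup] at this
  simpa [hg] using this

theorem head?_map_factor_normalForm_wordProd_mul_or {w : List Letter} (hw : IsReduced w)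
    (b : FreeProdC2C3) :
    (normalForm (wordProd w * b)).head?.map factor = w.head?.map factor ∨
      (normalForm b).length = w.length + (normalForm (wordProd w * b)).length := by
  induction w with
  | nil => simp
  | cons p w ih =>
    rw [normalForm_wordProd_cons_mul]
    set x := normalForm (wordProd w * b)
    by_cases hclean : ∀ y ∈ x.head?, p.factor ≠ y.factor
    · simp [push_of_factor_ne hclean]
    obtain ⟨y, v, hx, hpy⟩ : ∃ y v, x = y :: v ∧ p.factor = y.factor := by
      rcases hx : x with _ | ⟨y, v⟩ <;> simp_all
    rcases push_cons_of_factor_eq v hpy with hv | ⟨r, hv, hr⟩ <;> rw [hx, hv]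
    · right
      rcases ih hw.tail with ih | ih
      · have := (List.isChain_cons.1 hw).1
        rw [hx] at ih
        rcases w with _ | ⟨z, w⟩ <;> simp_all
      · simp only [ih, hx, List.length_cons]
        omega
    · simp [hr]

theorem headFactor_mul_or (a b : FreeProdC2C3) :
    headFactor (a * b) = headFactor a ∨
      (normalForm b).length = (normalForm a).length + (normalForm (a * b)).length := by
  have := head?_map_factor_normalForm_wordProd_mul_or (isReduced_normalForm a) b
  rwa [wordProd_normalForm] at this

def HasShorterCounterexample (a b : FreeProdC2C3) : Prop :=
  ∃ a' b', Commute a' b' ∧ ¬HasCommonRoot a' b' ∧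
    (normalForm a').length + (normalForm b').length < (normalForm a).length + (normalForm b).length

theorem HasShorterCounterexample.symm {a b : FreeProdC2C3} (h : HasShorterCounterexample a b) :
    HasShorterCounterexample b a :=
  let ⟨a', b', h', hab', hlt⟩ := h
  ⟨b', a', h'.symm, mt HasCommonRoot.symm hab', by omega⟩

theorem hasShorterCounterexample_of_ends_eq_of_two_le {a b : FreeProdC2C3} {x : Option Bool}
    (h : Commute a b) (hab : ¬HasCommonRoot a b) (ha : headFactor a = x) (ha' : lastFactor a = x)
    (hb : headFactor b = x) (hb' : lastFactor b = x) (hb2 : 2 ≤ (normalForm b).length) :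
    HasShorterCounterexample a b := by
  obtain ⟨q, v, hq⟩ : ∃ q v, normalForm b = q :: v := by
    rcases hq : normalForm b with _ | ⟨q, v⟩ <;> simp_all
  obtain rfl : x = some q.factor := by rw [← hb, headFactor, hq]; rfl
  refine ⟨q.toGroup⁻¹ * a * q.toGroup, q.toGroup⁻¹ * b * q.toGroup, ?_,
    fun hr => hab (hr.of_conj _), ?_⟩
  · simpa only [inv_inv] using (Commute.conj_iff q.toGroup⁻¹).2 h
  · have := length_normalForm_conj_le ha ha'
    have := length_normalForm_conj_lt (by simp [hq]) hb' hb2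
    omega

theorem hasShorterCounterexample_of_ends_eq {a b : FreeProdC2C3} {x : Option Bool}
    (h : Commute a b) (hab : ¬HasCommonRoot a b) (ha : headFactor a = x) (ha' : lastFactor a = x)
    (hb : headFactor b = x) (hb' : lastFactor b = x) : HasShorterCounterexample a b := by
  obtain ⟨ha1, hb1⟩ := ne_one_of_not_hasCommonRoot hab
  rcases le_or_gt 2 (normalForm b).length with hb2 | hb2
  · exact hasShorterCounterexample_of_ends_eq_of_two_le h hab ha ha' hb hb' hb2
  rcases le_or_gt 2 (normalForm a).length with ha2 | ha2
  · exact (hasShorterCounterexample_of_ends_eq_of_two_le h.symm (mt HasCommonRoot.symm hab)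
      hb hb' ha ha' ha2).symm
  obtain ⟨p, hp⟩ : ∃ p, normalForm a = [p] := by
    rcases hp : normalForm a with _ | ⟨p, _ | _⟩ <;> simp_all
  obtain ⟨q, hq⟩ : ∃ q, normalForm b = [q] := by
    rcases hq : normalForm b with _ | ⟨q, _ | _⟩ <;> simp_all
  have hpq : p.factor = q.factor := by simpa [headFactor, hp, hq] using ha.trans hb.symm
  refine absurd ?_ hab
  rw [← wordProd_normalForm a, ← wordProd_normalForm b, hp, hq]
  simpa using hasCommonRoot_toGroup hpq

theorem hasShorterCounterexample_of_headFactor_ne_lastFactor {a b : FreeProdC2C3}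
    (h : Commute a b) (hab : ¬HasCommonRoot a b) (hba : lastFactor b = headFactor a)
    (hcyc : headFactor b ≠ lastFactor b) : HasShorterCounterexample a b := by
  obtain ⟨ha, hb⟩ := ne_one_of_not_hasCommonRoot hab
  have ha0 : 0 < (normalForm a).length := by simpa [List.length_pos_iff] using ha
  have hb0 : 0 < (normalForm b).length := by simpa [List.length_pos_iff] using hb
  rcases headFactor_mul_or a b with hab' | hlen
  · rcases headFactor_mul_or b a with hba' | hlen
    · exact absurd (by rw [← hba', ← h.eq, hab', ← hba]) hcyc
    · exact ⟨b, b * a, (Commute.refl b).mul_right h.symm,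
        fun hr => hab hr.of_self_mul.symm, by omega⟩
  · exact ⟨a, a * b, (Commute.refl a).mul_right h, fun hr => hab hr.of_self_mul, by omega⟩

theorem hasShorterCounterexample {a b : FreeProdC2C3} (h : Commute a b)
    (hab : ¬HasCommonRoot a b) : HasShorterCounterexample a b := by
  obtain ⟨ha, hb⟩ := ne_one_of_not_hasCommonRoot hab
  by_cases hseam : lastFactor a = headFactor b
  · have hseam' := lastFactor_eq_headFactor_of_commute h ha hseam
    by_cases hcyc : headFactor b = lastFactor b
    · exact hasShorterCounterexample_of_ends_eq h hab (hseam'.symm.trans hcyc.symm) hseam rfl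
        hcyc.symm
    · exact hasShorterCounterexample_of_headFactor_ne_lastFactor h hab hseam' hcyc
  · exact absurd (hasCommonRoot_of_lastFactor_ne h hseam
      (mt (lastFactor_eq_headFactor_of_commute h.symm hb) hseam)) hab

theorem hasCommonRoot_of_commute {a b : FreeProdC2C3} (h : Commute a b) : HasCommonRoot a b := by
  induction hn : (normalForm a).length + (normalForm b).length using Nat.strong_induction_on
    generalizing a b with
  | _ n ih =>
  by_contra hab
  obtain ⟨a', b', h', hab', hlt⟩ := hasShorterCounterexample h hab
  exact hab' (ih _ (hn ▸ hlt) h' rfl)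

end FreeProdC2C3

/-- If `a, b ∈ ℤ/2ℤ ∗ ℤ/3ℤ` commute, then `a = c^k` and `b = c^l` for some element
`c` and integers `k, l`. -/
theorem commuting_elements_free_product (a b : FreeProdC2C3) (h : a * b = b * a) :
    ∃ (c : FreeProdC2C3) (k l : ℤ), a = c ^ k ∧ b = c ^ l :=
  FreeProdC2C3.hasCommonRoot_of_commute h
end
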